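/- Let N ≥ 3, θ ∈ (0, π/4], μ = arctan(sin 2θ), and α = 2cos(2θ)/√(1+sin²(2θ)). Let |ψ⟩ = cosθ|0⟩^{⊗N} + sinθ|1⟩^{⊗N} ∈ (ℂ²)^{⊗N}. Put A_{0,i} = σ_Z and A_{1,i} = σ_X on sites i = 1,…,N−1, and A_{0,N} = cos(μ)σ_Z + sin(μ)σ_X, A_{1,N} = cos(μ)σ_Z − sin(μ)σ_X on site N. Then for every (a_1,…,a_{N−2}) ∈ {0,1}^{N−2}, ⟨ψ| (∏_{i=1}^{N−2} P^{a_i}_{A_{1,i}}) · (α A_{0,N−1} + A_{0,N−1}A_{0,N} + A_{0,N−1}A_{1,N} + (−1)^{a_1+⋯+a_{N−2}}(A_{1,N−1}A_{0,N} − A_{1,N−1}A_{1,N})) |ψ⟩ = √(8+2α²)·2^{−(N−2)}. -/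

import Mathlib

/-!
Every operator in the correlator is a tensor product of single-site operators, and the tilted
GHZ state is supported on the two strings `0…0` and `1…1`; so each expectation value only sees
the four entries `⟨b…b| · |d…d⟩`, which factor over the sites. The projectors `P^{a_i}_{σ_X}` on the
first `N - 2` sites contribute `2^{-(N-2)}` on the diagonal and `(-1)^{Σ aᵢ} 2^{-(N-2)}` off it, and
this sign squares away against the one in front of the `A_{1,N-1}` terms. What remains is
`2^{-(N-2)}` times the tilted CHSH value `α cos 2θ + 2 cos μ + 2 sin 2θ sin μ`, which equals
`√(8 + 2α²)` for `tan μ = sin 2θ` and `α = 2 cos 2θ / √(1 + sin² 2θ)`.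
-/

open scoped BigOperators
open Matrix

noncomputable section

/-- Pauli `σ_Z`. -/
def sZ : Matrix (Fin 2) (Fin 2) ℂ := !![1, 0; 0, -1]

/-- Pauli `σ_X`. -/
def sX : Matrix (Fin 2) (Fin 2) ℂ := !![0, 1; 1, 0]

/-- The projector `P^a_D = (I + (-1)^a D)/2`. -/
def projP {n : Type*} [Fintype n] [DecidableEq n] (a : Fin 2) (D : Matrix n n ℂ) :
    Matrix n n ℂ :=
  (2 : ℂ)⁻¹ • (1 + ((-1 : ℂ) ^ a.val) • D)

/-- The operator on `(ℂ²)^{⊗N}` acting as `M` on the `i`-th tensor factor and as the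
identity elsewhere. -/
def siteOpQ {N : ℕ} (i : Fin N) (M : Matrix (Fin 2) (Fin 2) ℂ) :
    Matrix (Fin N → Fin 2) (Fin N → Fin 2) ℂ :=
  fun x y => M (x i) (y i) * ∏ j ∈ Finset.univ.erase i, (if x j = y j then (1 : ℂ) else 0)

/-- The operator on `(ℂ²)^{⊗N}` acting as `F i` on the tensor factors `i ∈ S` and as the
identity elsewhere. -/
def multiOpQ {N : ℕ} (S : Finset (Fin N)) (F : Fin N → Matrix (Fin 2) (Fin 2) ℂ) :
    Matrix (Fin N → Fin 2) (Fin N → Fin 2) ℂ :=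
  fun x y => (∏ i ∈ S, F i (x i) (y i)) * ∏ j ∈ Sᶜ, (if x j = y j then (1 : ℂ) else 0)

/-- The tilted GHZ state with digit string `k`. -/
def ghzVec (N : ℕ) (θ : ℝ) (k : Fin N → Fin 2) : (Fin N → Fin 2) → ℂ :=
  fun x =>
    (if x = k then ((-1 : ℂ) ^ (∑ i, (k i).val)) * (Real.cos θ : ℂ) else 0) +
    (if x = (fun i => 1 - k i) then (Real.sin θ : ℂ) else 0)

/-- The ideal observables: `A_{0,i} = σ_Z`, `A_{1,i} = σ_X` for sites `i ≤ N-1`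
(0-indexed `i < N-1`), and `A_{0,N} = cos μ σ_Z + sin μ σ_X`,
`A_{1,N} = cos μ σ_Z - sin μ σ_X` on the last site. -/
def idealObs (N : ℕ) (μ : ℝ) (a : Fin 2) (i : Fin N) : Matrix (Fin 2) (Fin 2) ℂ :=
  if (i : ℕ) < N - 1 then (if a = 0 then sZ else sX)
  else
    (if a = 0 then (Real.cos μ : ℂ) • sZ + (Real.sin μ : ℂ) • sX
     else (Real.cos μ : ℂ) • sZ - (Real.sin μ : ℂ) • sX)


section TensorOp

variable {ι κ R : Type*} [Fintype ι] [CommSemiring R]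

def tensorOp (F : ι → Matrix κ κ R) : Matrix (ι → κ) (ι → κ) R :=
  fun x y => ∏ i, F i (x i) (y i)

theorem tensorOp_mul [DecidableEq ι] [Fintype κ] (F G : ι → Matrix κ κ R) :
    tensorOp F * tensorOp G = tensorOp (F * G) := by
  ext x y
  simp only [tensorOp, mul_apply, Pi.mul_apply, ← Finset.prod_mul_distrib]
  exact (Fintype.prod_sum fun i k => F i (x i) k * G i k (y i)).symm

theorem tensorOp_one [DecidableEq κ] : tensorOp (1 : ι → Matrix κ κ R) = 1 := by
  ext x y
  simp only [tensorOp, Pi.one_apply, one_apply, Finset.prod_boole, Finset.mem_univ,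
    forall_const, funext_iff]

end TensorOp

theorem multiOpQ_eq_tensorOp {N : ℕ} (S : Finset (Fin N))
    (F : Fin N → Matrix (Fin 2) (Fin 2) ℂ) :
    multiOpQ S F = tensorOp (S.piecewise F 1) := by
  ext x y
  rw [multiOpQ, tensorOp, ← Finset.prod_mul_prod_compl S]
  congr 1
  · exact Finset.prod_congr rfl fun i hi => by rw [Finset.piecewise_eq_of_mem _ _ _ hi]
  · refine Finset.prod_congr rfl fun i hi => ?_
    rw [Finset.piecewise_eq_of_notMem _ _ _ (Finset.mem_compl.mp hi), Pi.one_apply, one_apply]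

theorem siteOpQ_eq_tensorOp {N : ℕ} (i : Fin N) (M : Matrix (Fin 2) (Fin 2) ℂ) :
    siteOpQ i M = tensorOp (Pi.mulSingle i M) := by
  ext x y
  rw [siteOpQ, tensorOp, ← Finset.mul_prod_erase _ _ (Finset.mem_univ i), Pi.mulSingle_eq_same]
  congr 1
  refine Finset.prod_congr rfl fun j hj => ?_
  rw [Pi.mulSingle_eq_of_ne (Finset.ne_of_mem_erase hj), one_apply]

theorem siteOpQ_one {N : ℕ} (i : Fin N) : siteOpQ i 1 = 1 := by
  rw [siteOpQ_eq_tensorOp, Pi.mulSingle_one, tensorOp_one]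

theorem ghzVec_zero (N : ℕ) (θ : ℝ) :
    ghzVec N θ (fun _ => 0) =
      Pi.single (fun _ => 0) (Real.cos θ : ℂ) + Pi.single (fun _ => 1) (Real.sin θ : ℂ) := by
  ext x
  simp [ghzVec, Pi.single_apply]

theorem star_ghzVec_zero_dotProduct_mulVec {N : ℕ} (θ : ℝ)
    (M : Matrix (Fin N → Fin 2) (Fin N → Fin 2) ℂ) :
    star (ghzVec N θ fun _ => 0) ⬝ᵥ M *ᵥ ghzVec N θ (fun _ => 0) =
      (Real.cos θ : ℂ) ^ 2 * M (fun _ => 0) (fun _ => 0) +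
        (Real.cos θ : ℂ) * Real.sin θ * M (fun _ => 0) (fun _ => 1) +
        (Real.sin θ : ℂ) * Real.cos θ * M (fun _ => 1) (fun _ => 0) +
        (Real.sin θ : ℂ) ^ 2 * M (fun _ => 1) (fun _ => 1) := by
  simp only [ghzVec_zero, star_add, ← Pi.single_star, Complex.star_def, Complex.conj_ofReal,
    mulVec_add, mulVec_single, add_dotProduct, single_dotProduct, Pi.add_apply, Pi.smul_apply,
    col_apply, op_smul_eq_mul]
  ring

theorem prod_projP_sX_apply {ι : Type*} (S : Finset ι) (a : ι → Fin 2) (b d : Fin 2) :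
    ∏ j ∈ S, projP (a j) sX b d =
      (2⁻¹ : ℂ) ^ S.card * if b = d then 1 else (-1 : ℂ) ^ ∑ j ∈ S, (a j).val := by
  have hentry : ∀ c : Fin 2, projP c sX b d = 2⁻¹ * if b = d then 1 else (-1 : ℂ) ^ c.val := by
    intro c
    fin_cases b <;> fin_cases d <;> simp [projP, sX]
  simp only [hentry, Finset.prod_mul_distrib, Finset.prod_const]
  split_ifs
  · simp
  · rw [Finset.prod_pow_eq_pow_sum]

theorem prod_univ_eq_prod_lt_mul {M : Type*} [CommMonoid M] {N : ℕ} (hN : 2 ≤ N)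
    (f : Fin N → M) (i₂ i₁ : Fin N) (h₂ : (i₂ : ℕ) = N - 2) (h₁ : (i₁ : ℕ) = N - 1) :
    ∏ j, f j = (∏ j ∈ Finset.univ.filter fun j : Fin N => (j : ℕ) < N - 2, f j) * f i₂ * f i₁ := by
  have hrest : (Finset.univ.filter fun j : Fin N => ¬ (j : ℕ) < N - 2) = {i₂, i₁} := by
    ext j
    simp only [Finset.mem_filter, Finset.mem_univ, true_and, Finset.mem_insert,
      Finset.mem_singleton, Fin.ext_iff, h₂, h₁]
    omega
  have hne : i₂ ≠ i₁ := fun h => by rw [Fin.ext_iff, h₂, h₁] at h; omega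
  rw [← Finset.prod_filter_mul_prod_filter_not Finset.univ (fun j : Fin N => (j : ℕ) < N - 2),
    hrest, Finset.prod_pair hne, mul_assoc]

theorem idealObs_of_lt {N : ℕ} (μ : ℝ) (c : Fin 2) {i : Fin N} (hi : (i : ℕ) < N - 1) :
    idealObs N μ c i = if c = 0 then sZ else sX :=
  if_pos hi

theorem idealObs_of_eq {N : ℕ} (μ : ℝ) (c : Fin 2) {i : Fin N} (hi : (i : ℕ) = N - 1) :
    idealObs N μ c i =
      if c = 0 then (Real.cos μ : ℂ) • sZ + (Real.sin μ : ℂ) • sX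
      else (Real.cos μ : ℂ) • sZ - (Real.sin μ : ℂ) • sX :=
  if_neg (by omega)

theorem star_ghzVec_zero_dotProduct_proj_site_site {N : ℕ} (hN : 2 ≤ N) (θ μ : ℝ)
    (a : Fin N → Fin 2) (i₂ i₁ : Fin N) (h₂ : (i₂ : ℕ) = N - 2) (h₁ : (i₁ : ℕ) = N - 1)
    (A B : Matrix (Fin 2) (Fin 2) ℂ) :
    star (ghzVec N θ fun _ => 0) ⬝ᵥ
        (multiOpQ (Finset.univ.filter fun i : Fin N => (i : ℕ) < N - 2)
            (fun i => projP (a i) (idealObs N μ 1 i)) * (siteOpQ i₂ A * siteOpQ i₁ B)) *ᵥ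
          ghzVec N θ (fun _ => 0) =
      (2⁻¹ : ℂ) ^ (N - 2) * ((Real.cos θ : ℂ) ^ 2 * A 0 0 * B 0 0 +
        (-1 : ℂ) ^ (∑ i ∈ Finset.univ.filter (fun i : Fin N => (i : ℕ) < N - 2), (a i).val) *
          Real.cos θ * Real.sin θ * (A 0 1 * B 0 1 + A 1 0 * B 1 0) +
        (Real.sin θ : ℂ) ^ 2 * A 1 1 * B 1 1) := by
  set S := Finset.univ.filter fun i : Fin N => (i : ℕ) < N - 2 with hS
  have h₂S : i₂ ∉ S := by simp [hS, h₂]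
  have h₁S : i₁ ∉ S := by simp only [hS, Finset.mem_filter, Finset.mem_univ, true_and, h₁]; omega
  have hne : i₂ ≠ i₁ := fun h => by rw [Fin.ext_iff, h₂, h₁] at h; omega
  have hcard : S.card = N - 2 := by rw [hS, Fin.card_filter_val_lt]; omega
  have hsX : ∀ i ∈ S, idealObs N μ 1 i = sX := fun i hi => by
    simp only [hS, Finset.mem_filter, Finset.mem_univ, true_and] at hi
    rw [idealObs_of_lt μ 1 (by omega), if_neg one_ne_zero]
  have hentry : ∀ b d : Fin 2,
      tensorOp (S.piecewise (fun i => projP (a i) (idealObs N μ 1 i)) 1 *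
          (Pi.mulSingle i₂ A * Pi.mulSingle i₁ B)) (fun _ => b) (fun _ => d) =
        (∏ j ∈ S, projP (a j) sX b d) * A b d * B b d := by
    intro b d
    rw [tensorOp, prod_univ_eq_prod_lt_mul hN _ i₂ i₁ h₂ h₁]
    simp only [Pi.mul_apply, Finset.piecewise_eq_of_notMem _ _ _ h₂S,
      Finset.piecewise_eq_of_notMem _ _ _ h₁S, Pi.mulSingle_eq_same,
      Pi.mulSingle_eq_of_ne hne, Pi.mulSingle_eq_of_ne hne.symm, Pi.one_apply, one_mul, mul_one]
    congr 2
    refine Finset.prod_congr rfl fun j hj => ?_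
    rw [Finset.piecewise_eq_of_mem _ _ _ hj, hsX j hj,
      Pi.mulSingle_eq_of_ne (ne_of_mem_of_not_mem hj h₂S),
      Pi.mulSingle_eq_of_ne (ne_of_mem_of_not_mem hj h₁S), mul_one, mul_one]
  rw [multiOpQ_eq_tensorOp, siteOpQ_eq_tensorOp, siteOpQ_eq_tensorOp, tensorOp_mul, tensorOp_mul,
    star_ghzVec_zero_dotProduct_mulVec]
  simp only [hentry, prod_projP_sX_apply, hcard, ↓reduceIte, if_neg zero_ne_one, if_neg one_ne_zero]
  ring

theorem tilted_chsh_value_eq_sqrt {x y μ α : ℝ} (hxy : x ^ 2 + y ^ 2 = 1) (hμ : μ = Real.arctan x)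
    (hα : α = 2 * y / Real.sqrt (1 + x ^ 2)) :
    α * y + 2 * Real.cos μ + 2 * x * Real.sin μ = Real.sqrt (8 + 2 * α ^ 2) := by
  subst hμ hα
  rw [Real.cos_arctan, Real.sin_arctan]
  set r := Real.sqrt (1 + x ^ 2)
  have hr : 0 < r := Real.sqrt_pos.mpr (by positivity)
  have hr2 : r ^ 2 = 1 + x ^ 2 := Real.sq_sqrt (by positivity)
  have hsqrt : Real.sqrt (8 + 2 * (2 * y / r) ^ 2) = 4 / r := by
    rw [Real.sqrt_eq_iff_mul_self_eq_of_pos (by positivity)]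
    field_simp
    linear_combination (-8) * hr2 - 8 * hxy
  rw [hsqrt]
  field_simp
  linear_combination 2 * hxy

/-- the ideal tilted-CHSH correlation of Lemma 1, condition (iii), holds
exactly on the tilted GHZ state with the ideal observables. -/
theorem stmt_9 (N : ℕ) (hN : 3 ≤ N) (θ μ α : ℝ)
    (hμ : μ = Real.arctan (Real.sin (2 * θ)))
    (hα : α = 2 * Real.cos (2 * θ) / Real.sqrt (1 + Real.sin (2 * θ) ^ 2)) :
    ∀ a : Fin N → Fin 2,
      star (ghzVec N θ fun _ => 0) ⬝ᵥ
          ((multiOpQ (Finset.univ.filter fun i : Fin N => (i : ℕ) < N - 2)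
              (fun i => projP (a i) (idealObs N μ 1 i)) *
            ((α : ℂ) • siteOpQ (⟨N - 2, by omega⟩ : Fin N) (idealObs N μ 0 ⟨N - 2, by omega⟩) +
              siteOpQ (⟨N - 2, by omega⟩ : Fin N) (idealObs N μ 0 ⟨N - 2, by omega⟩) *
                siteOpQ (⟨N - 1, by omega⟩ : Fin N) (idealObs N μ 0 ⟨N - 1, by omega⟩) +
              siteOpQ (⟨N - 2, by omega⟩ : Fin N) (idealObs N μ 0 ⟨N - 2, by omega⟩) *
                siteOpQ (⟨N - 1, by omega⟩ : Fin N) (idealObs N μ 1 ⟨N - 1, by omega⟩) +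
              ((-1 : ℂ) ^
                  (∑ i ∈ Finset.univ.filter (fun i : Fin N => (i : ℕ) < N - 2), (a i).val)) •
                (siteOpQ (⟨N - 2, by omega⟩ : Fin N) (idealObs N μ 1 ⟨N - 2, by omega⟩) *
                    siteOpQ (⟨N - 1, by omega⟩ : Fin N) (idealObs N μ 0 ⟨N - 1, by omega⟩) -
                  siteOpQ (⟨N - 2, by omega⟩ : Fin N) (idealObs N μ 1 ⟨N - 2, by omega⟩) *
                    siteOpQ (⟨N - 1, by omega⟩ : Fin N)
                      (idealObs N μ 1 ⟨N - 1, by omega⟩))))).mulVec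
            (ghzVec N θ fun _ => 0) =
        (Real.sqrt (8 + 2 * α ^ 2) : ℂ) * ((2 : ℂ) ^ (N - 2))⁻¹ := by
  intro a
  set i₂ : Fin N := ⟨N - 2, by omega⟩
  set i₁ : Fin N := ⟨N - 1, by omega⟩
  have hε : ((-1 : ℂ) ^ ∑ i ∈ Finset.univ.filter (fun i : Fin N => (i : ℕ) < N - 2),
      (a i).val) ^ 2 = 1 := by rw [← pow_mul, pow_mul', neg_one_sq, one_pow]
  have h₂ : (i₂ : ℕ) < N - 1 := show N - 2 < N - 1 by omega
  have hsingle : (α : ℂ) • siteOpQ i₂ sZ = (α : ℂ) • (siteOpQ i₂ sZ * siteOpQ i₁ 1) := by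
    rw [siteOpQ_one, mul_one]
  simp only [idealObs_of_lt μ _ h₂, idealObs_of_eq μ _ (rfl : (i₁ : ℕ) = N - 1), ↓reduceIte,
    one_ne_zero]
  rw [hsingle]
  simp only [Matrix.mul_add, Matrix.mul_sub, Matrix.mul_smul, add_mulVec, sub_mulVec,
    smul_mulVec, dotProduct_add, dotProduct_sub, dotProduct_smul,
    star_ghzVec_zero_dotProduct_proj_site_site (by omega : 2 ≤ N) θ μ a i₂ i₁ rfl rfl]
  have hvalue := tilted_chsh_value_eq_sqrt (Real.sin_sq_add_cos_sq (2 * θ)) hμ hα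
  rw [Real.sin_two_mul, Real.cos_two_mul'] at hvalue
  replace hvalue := congrArg Complex.ofReal hvalue
  push_cast at hvalue
  simp only [sZ, sX, Fin.isValue, of_apply, cons_val', cons_val_zero, cons_val_one,
    cons_val_fin_one, one_apply_eq, ne_eq, zero_ne_one, one_ne_zero, not_false_eq_true,
    one_apply_ne, smul_of, smul_cons, smul_empty, smul_eq_mul, Matrix.add_apply, Matrix.sub_apply,
    Complex.ofReal_cos, Complex.ofReal_sin, ← inv_pow]
  linear_combination 2⁻¹ ^ (N - 2) * hvalue +
    4 * 2⁻¹ ^ (N - 2) * Complex.cos θ * Complex.sin θ * Complex.sin μ * hε +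
    2 * 2⁻¹ ^ (N - 2) * Complex.cos μ * Complex.sin_sq_add_cos_sq (θ : ℂ)

end
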